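/- For every integer n ≥ 4, the image of 𝒩 under the second iterate of the counting operator is s^[2](𝒩) = { x ∈ s(𝒩) | ∑_{j=0}^{n-1} j · x_j = n }; equivalently, s^[2](𝒩) = { x ∈ 𝒩 | ∑_{j=0}^{n-1} x_j = n and ∑_{j=0}^{n-1} j · x_j = n }. -/

import Mathlib

/-- The counting operator: `countOp n x j` is the number of indices `i` with `x i = j`. -/
def countOp (n : ℕ) (x : Fin n → ℕ) : Fin n → ℕ :=
  fun j => (Finset.univ.filter fun i => x i = (j : ℕ)).card

/-- `𝒩`: the set of `n`-chains that are neither constant nor injective. -/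
def NSet (n : ℕ) : Set (Fin n → ℕ) :=
  {x | (∀ i, x i < n) ∧ (¬ ∃ c, ∀ i, x i = c) ∧ ¬ Function.Injective x}

/-!
For an `n`-chain `x`, the count vector `s(x)` has entries summing to `n` and weighted sum
`∑ j * s(x)_j = ∑ x_i`; conversely every vector summing to `n` is a count vector, obtained by
laying out `y_j` copies of each `j`. The conditions defining `𝒩` transfer along `s` once `n ≥ 4`:
`s(x)` is constant only when `x` is a permutation, and an injective vector with entries `< n`
sums to `n(n-1)/2 ≠ n`. Hence `s(𝒩) = {x ∈ 𝒩 | ∑ x = n}`, and applying `s` once more converts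
the condition `∑ x = n` on the preimage into `∑ j * y_j = n` on the image.
-/

open Finset

section countOp

variable {n : ℕ}

lemma countOp_apply_le (x : Fin n → ℕ) (j : Fin n) : countOp n x j ≤ n :=
  (card_le_univ _).trans_eq (Fintype.card_fin n)

lemma countOp_apply_eq_iff (x : Fin n → ℕ) (j : Fin n) :
    countOp n x j = n ↔ ∀ i, x i = j := by
  simpa [countOp, filter_eq_self] using card_eq_iff_eq_univ {i | x i = (j : ℕ)}

lemma sum_countOp {x : Fin n → ℕ} (hx : ∀ i, x i < n) : ∑ j, countOp n x j = n := by
  calc ∑ j, countOp n x j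
      = ∑ j, #{i | (⟨x i, hx i⟩ : Fin n) = j} := by
        simp only [countOp, Fin.ext_iff]
    _ = #(univ : Finset (Fin n)) := (card_eq_sum_card_fiberwise fun i _ => mem_univ _).symm
    _ = n := by simp

lemma sum_mul_countOp {x : Fin n → ℕ} (hx : ∀ i, x i < n) :
    ∑ j : Fin n, (j : ℕ) * countOp n x j = ∑ i, x i := by
  rw [← sum_fiberwise_of_maps_to (g := fun i => (⟨x i, hx i⟩ : Fin n)) (t := univ)
    (fun i _ => mem_univ _) x]
  refine sum_congr rfl fun j _ => ?_
  rw [sum_congr rfl fun i hi => by simpa [Fin.ext_iff] using (mem_filter.mp hi).2]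
  simp [countOp, Fin.ext_iff, mul_comm]

lemma exists_countOp_eq {y : Fin n → ℕ} (hy : ∑ j, y j = n) :
    ∃ x : Fin n → ℕ, (∀ i, x i < n) ∧ countOp n x = y := by
  classical
  let e : (Σ k : Fin n, Fin (y k)) ≃ Fin n :=
    Fintype.equivFinOfCardEq (by simp [Fintype.card_sigma, hy])
  refine ⟨fun i => (e.symm i).1, fun i => (e.symm i).1.isLt, funext fun j => ?_⟩
  calc countOp n (fun i => (e.symm i).1) j
      = #{p : Σ k : Fin n, Fin (y k) | p.1 = j} :=
        card_equiv e.symm fun i => by simp [Fin.ext_iff]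
    _ = #(({j} : Finset (Fin n)).sigma fun _ => univ) := by
        congr 1; ext p; simp
    _ = y j := by simp

lemma injective_iff_countOp_le_one {x : Fin n → ℕ} (hx : ∀ i, x i < n) :
    Function.Injective x ↔ ∀ j, countOp n x j ≤ 1 := by
  refine ⟨fun hinj j => card_le_one.mpr fun a ha b hb => ?_, fun h a b hab => ?_⟩
  · exact hinj ((mem_filter.mp ha).2.trans (mem_filter.mp hb).2.symm)
  · exact card_le_one.mp (h ⟨x a, hx a⟩) a (by simp) b (by simp [hab])

lemma eq_one_of_sum_eq_card_of_le_one {ι : Type*} [Fintype ι] {y : ι → ℕ}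
    (hy : ∑ j, y j = Fintype.card ι) (h : ∀ j, y j ≤ 1) : ∀ j, y j = 1 := by
  by_contra! ⟨j, hj⟩
  have : ∑ k, y k < ∑ _k : ι, 1 :=
    sum_lt_sum (fun k _ => h k) ⟨j, mem_univ j, lt_of_le_of_ne (h j) hj⟩
  simp [hy] at this

lemma not_injective_of_sum_eq (hn : 4 ≤ n) {y : Fin n → ℕ} (hy : ∀ j, y j < n)
    (hs : ∑ j, y j = n) : ¬ Function.Injective y := by
  intro hinj
  -- `y` is then a permutation of `0, …, n - 1`, whose sum is `n (n - 1) / 2`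
  have hbij : Function.Bijective fun j => (⟨y j, hy j⟩ : Fin n) :=
    Finite.injective_iff_bijective.mp fun u v huv => hinj (by simpa [Fin.ext_iff] using huv)
  have hperm : ∑ j, y j = ∑ j : Fin n, (j : ℕ) :=
    Fintype.sum_bijective _ hbij _ _ fun _ => rfl
  have hgauss := sum_range_id_mul_two n
  rw [← Fin.sum_univ_eq_sum_range, ← hperm, hs] at hgauss
  obtain ⟨m, rfl⟩ : ∃ m, n = m + 4 := ⟨n - 4, by omega⟩
  rw [show m + 4 - 1 = m + 3 by omega] at hgauss
  nlinarith

end countOp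

section NSet

variable {n : ℕ}

lemma countOp_mem_NSet (hn : 4 ≤ n) {x : Fin n → ℕ} (hx : x ∈ NSet n) :
    countOp n x ∈ NSet n := by
  obtain ⟨hlt, hnc, hni⟩ := hx
  have hbound : ∀ j, countOp n x j < n := fun j =>
    (countOp_apply_le x j).lt_of_ne fun h => hnc ⟨j, (countOp_apply_eq_iff x j).mp h⟩
  refine ⟨hbound, ?_, not_injective_of_sum_eq hn hbound (sum_countOp hlt)⟩
  rintro ⟨c, hc⟩
  obtain ⟨j, hj⟩ : ∃ j, 1 < countOp n x j := by
    simpa using mt (injective_iff_countOp_le_one hlt).mpr hni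
  have hsum := sum_countOp hlt
  simp only [hc, sum_const, card_univ, Fintype.card_fin, smul_eq_mul] at hsum hj
  nlinarith

lemma exists_countOp_eq_of_mem_NSet {y : Fin n → ℕ} (hy : y ∈ NSet n) (hs : ∑ j, y j = n) :
    ∃ x ∈ NSet n, countOp n x = y := by
  obtain ⟨hlt, hnc, -⟩ := hy
  obtain ⟨x, hxlt, rfl⟩ := exists_countOp_eq hs
  refine ⟨x, ⟨hxlt, ?_, fun hinj => ?_⟩, rfl⟩
  · rintro ⟨c, hc⟩
    obtain ⟨i₀⟩ : Nonempty (Fin n) := by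
      by_contra h
      exact hnc ⟨0, fun i => (h ⟨i⟩).elim⟩
    have hc₀ : c < n := hc i₀ ▸ hxlt i₀
    exact (hlt ⟨c, hc₀⟩).ne ((countOp_apply_eq_iff x ⟨c, hc₀⟩).mpr hc)
  · have hle : ∀ j, countOp n x j ≤ 1 := (injective_iff_countOp_le_one hxlt).mp hinj
    exact hnc ⟨1, eq_one_of_sum_eq_card_of_le_one (hs.trans (Fintype.card_fin n).symm) hle⟩

lemma image_countOp_NSet (hn : 4 ≤ n) :
    countOp n '' NSet n = {x ∈ NSet n | ∑ j, x j = n} := by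
  ext y
  constructor
  · rintro ⟨x, hx, rfl⟩
    exact ⟨countOp_mem_NSet hn hx, sum_countOp hx.1⟩
  · rintro ⟨hy, hs⟩
    exact exists_countOp_eq_of_mem_NSet hy hs

end NSet

lemma image_countOp_sep_sum_eq {n : ℕ} {A : Set (Fin n → ℕ)} (hA : ∀ x ∈ A, ∀ i, x i < n)
    (m : ℕ) :
    countOp n '' {x ∈ A | ∑ i, x i = m}
      = {y ∈ countOp n '' A | ∑ j : Fin n, (j : ℕ) * y j = m} := by
  ext y
  constructor
  · rintro ⟨x, ⟨hxA, hs⟩, rfl⟩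
    exact ⟨⟨x, hxA, rfl⟩, (sum_mul_countOp (hA x hxA)).trans hs⟩
  · rintro ⟨⟨x, hxA, rfl⟩, hs⟩
    exact ⟨x, ⟨hxA, (sum_mul_countOp (hA x hxA)).symm.trans hs⟩, rfl⟩

theorem image_NSet_second_iterate (n : ℕ) (hn : 4 ≤ n) :
    (countOp n)^[2] '' NSet n
        = {x ∈ countOp n '' NSet n | ∑ j : Fin n, (j : ℕ) * x j = n} ∧
    (countOp n)^[2] '' NSet n
        = {x ∈ NSet n | ∑ j : Fin n, x j = n ∧ ∑ j : Fin n, (j : ℕ) * x j = n} := by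
  have hfirst : (countOp n)^[2] '' NSet n
      = {x ∈ countOp n '' NSet n | ∑ j : Fin n, (j : ℕ) * x j = n} := by
    rw [Function.iterate_succ', Function.iterate_one, Set.image_comp,
      ← image_countOp_sep_sum_eq fun x hx => hx.1, image_countOp_NSet hn]
  refine ⟨hfirst, ?_⟩
  rw [hfirst, image_countOp_NSet hn]
  ext y
  simp only [Set.mem_ofPred_eq, and_assoc]
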